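/- The linear functional μ on U defined on the PBW basis by μ(E^m F^n K^l) = ζ·δ_{m,p−1}·δ_{n,p−1}·δ_{l,p+1} (for 0 ≤ m,n ≤ p−1, 0 ≤ l ≤ 2p−1), with ζ = −√(2/p)·([p−1]!)², is a right integral: (μ ⊗ id)(Δ(x)) = μ(x)·1 for all x ∈ U. -/
import Mathlib


open scoped TensorProduct
open Finset

noncomputable section

namespace LogHennings

/-- `q = exp(iπ/p)`. -/
def qq (p : ℕ) : ℂ := Complex.exp ((Real.pi : ℂ) * Complex.I / (p : ℂ))

/-- `q^{1/2} = exp(iπ/(2p))`. -/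
def qh (p : ℕ) : ℂ := Complex.exp ((Real.pi : ℂ) * Complex.I / (2 * (p : ℂ)))

/-- quantum integer `[m] = (q^m - q^{-m})/(q - q⁻¹)`. -/
def qnum (p m : ℕ) : ℂ := ((qq p) ^ m - (qq p)⁻¹ ^ m) / (qq p - (qq p)⁻¹)

/-- quantum factorial `[m]! = [m][m-1]⋯[1]`. -/
def qfac (p : ℕ) : ℕ → ℂ
  | 0 => 1
  | m + 1 => qnum p (m + 1) * qfac p m

/-- Generators of the restricted quantum group `U`. -/
inductive UGen | E | F | K | Kinv

abbrev FU := FreeAlgebra ℂ UGen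

def fE : FU := FreeAlgebra.ι ℂ UGen.E
def fF : FU := FreeAlgebra.ι ℂ UGen.F
def fK : FU := FreeAlgebra.ι ℂ UGen.K
def fKinv : FU := FreeAlgebra.ι ℂ UGen.Kinv

/-- Defining relations of the restricted quantum group `U`. -/
inductive URel (p : ℕ) : FU → FU → Prop
  | Epow : URel p (fE ^ p) 0
  | Fpow : URel p (fF ^ p) 0
  | Kpow : URel p (fK ^ (2 * p)) 1
  | KKinv : URel p (fK * fKinv) 1
  | KinvK : URel p (fKinv * fK) 1
  | KE : URel p (fK * fE * fKinv) ((qq p) ^ 2 • fE)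
  | KF : URel p (fK * fF * fKinv) (((qq p) ^ 2)⁻¹ • fF)
  | EF : URel p (fE * fF - fF * fE) ((qq p - (qq p)⁻¹)⁻¹ • (fK - fKinv))

/-- The restricted quantum group `U = \bar U_q(sl2)`. -/
abbrev Uq (p : ℕ) := RingQuot (URel p)

def UE (p : ℕ) : Uq p := RingQuot.mkAlgHom ℂ (URel p) fE
def UF (p : ℕ) : Uq p := RingQuot.mkAlgHom ℂ (URel p) fF
def UK (p : ℕ) : Uq p := RingQuot.mkAlgHom ℂ (URel p) fK
def UKinv (p : ℕ) : Uq p := RingQuot.mkAlgHom ℂ (URel p) fKinv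

/-- Generators of the braided extension `D`. -/
inductive DGen | e | phi | k | kinv

abbrev FD := FreeAlgebra ℂ DGen

def fe : FD := FreeAlgebra.ι ℂ DGen.e
def fphi : FD := FreeAlgebra.ι ℂ DGen.phi
def fk : FD := FreeAlgebra.ι ℂ DGen.k
def fkinv : FD := FreeAlgebra.ι ℂ DGen.kinv

/-- Defining relations of `D`. -/
inductive DRel (p : ℕ) : FD → FD → Prop
  | epow : DRel p (fe ^ p) 0
  | phipow : DRel p (fphi ^ p) 0
  | kpow : DRel p (fk ^ (4 * p)) 1
  | kkinv : DRel p (fk * fkinv) 1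
  | kinvk : DRel p (fkinv * fk) 1
  | ke : DRel p (fk * fe * fkinv) (qq p • fe)
  | kphi : DRel p (fk * fphi * fkinv) ((qq p)⁻¹ • fphi)
  | ephi : DRel p (fe * fphi - fphi * fe)
      ((qq p - (qq p)⁻¹)⁻¹ • (fk ^ 2 - fkinv ^ 2))

/-- The braided extension `D` of `U`. -/
abbrev Dq (p : ℕ) := RingQuot (DRel p)

def De (p : ℕ) : Dq p := RingQuot.mkAlgHom ℂ (DRel p) fe
def Dphi (p : ℕ) : Dq p := RingQuot.mkAlgHom ℂ (DRel p) fphi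
def Dk (p : ℕ) : Dq p := RingQuot.mkAlgHom ℂ (DRel p) fk
def Dkinv (p : ℕ) : Dq p := RingQuot.mkAlgHom ℂ (DRel p) fkinv

/-- The `R`-matrix of `D`. -/
def Rmat (p : ℕ) : Dq p ⊗[ℂ] Dq p :=
  ((4 * (p : ℂ))⁻¹) •
    ∑ m ∈ range p, ∑ n ∈ range (4 * p), ∑ j ∈ range (4 * p),
      (((qq p - (qq p)⁻¹) ^ m / qfac p m) *
          (qh p) ^ ((m : ℤ) * ((m : ℤ) - 1) + 2 * (m : ℤ) * ((n : ℤ) - (j : ℤ))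
            - (n : ℤ) * (j : ℤ))) •
        ((De p ^ m * Dk p ^ n) ⊗ₜ[ℂ] (Dphi p ^ m * Dk p ^ j))

/-- `R₂₁ = τ(R)`. -/
def R21 (p : ℕ) : Dq p ⊗[ℂ] Dq p := TensorProduct.comm ℂ (Dq p) (Dq p) (Rmat p)

/-- The monodromy `M = R₂₁ R`. -/
def Mmat (p : ℕ) : Dq p ⊗[ℂ] Dq p := R21 p * Rmat p

/-- The ribbon element `r ∈ D`. -/
def rib (p : ℕ) : Dq p :=
  ((1 - Complex.I) / (2 * (Real.sqrt p : ℂ))) •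
    ∑ m ∈ range p, ∑ j ∈ range (2 * p),
      (((qq p - (qq p)⁻¹) ^ m / qfac p m) *
          (qh p) ^ (-(m : ℤ) + 2 * (m : ℤ) * (j : ℤ) + ((j : ℤ) + (p : ℤ) + 1) ^ 2)) •
        (Dphi p ^ m * De p ^ m * Dk p ^ (2 * j))

/-- The Drinfeld element `u = Σ S(β_i) α_i` for `R = Σ α_i ⊗ β_i`,
depending on a choice of antipode `S`. -/
def drinfeldU (p : ℕ) (S : Dq p →ₗ[ℂ] Dq p) : Dq p :=
  LinearMap.mul' ℂ (Dq p) (TensorProduct.map S LinearMap.id (R21 p))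

/-- `Δ` takes the prescribed values on the generators of `U`. -/
def IsDeltaU (p : ℕ) (Δ : Uq p →ₐ[ℂ] Uq p ⊗[ℂ] Uq p) : Prop :=
  Δ (UE p) = 1 ⊗ₜ[ℂ] UE p + UE p ⊗ₜ[ℂ] UK p ∧
  Δ (UF p) = UKinv p ⊗ₜ[ℂ] UF p + UF p ⊗ₜ[ℂ] 1 ∧
  Δ (UK p) = UK p ⊗ₜ[ℂ] UK p ∧
  Δ (UKinv p) = UKinv p ⊗ₜ[ℂ] UKinv p

/-- `ε` takes the prescribed values on the generators of `U`. -/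
def IsCounitU (p : ℕ) (ε : Uq p →ₐ[ℂ] ℂ) : Prop :=
  ε (UE p) = 0 ∧ ε (UF p) = 0 ∧ ε (UK p) = 1 ∧ ε (UKinv p) = 1

/-- `S` is an algebra anti-homomorphism taking the prescribed values on the
generators of `U`. -/
def IsAntipodeU (p : ℕ) (S : Uq p →ₗ[ℂ] Uq p) : Prop :=
  S 1 = 1 ∧ (∀ x y, S (x * y) = S y * S x) ∧
  S (UE p) = -(UE p * UKinv p) ∧ S (UF p) = -(UK p * UF p) ∧
  S (UK p) = UKinv p ∧ S (UKinv p) = UK p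

/-- `Δ` takes the prescribed values on the generators of `D`. -/
def IsDeltaD (p : ℕ) (Δ : Dq p →ₐ[ℂ] Dq p ⊗[ℂ] Dq p) : Prop :=
  Δ (De p) = 1 ⊗ₜ[ℂ] De p + De p ⊗ₜ[ℂ] (Dk p ^ 2) ∧
  Δ (Dphi p) = (Dkinv p ^ 2) ⊗ₜ[ℂ] Dphi p + Dphi p ⊗ₜ[ℂ] 1 ∧
  Δ (Dk p) = Dk p ⊗ₜ[ℂ] Dk p ∧
  Δ (Dkinv p) = Dkinv p ⊗ₜ[ℂ] Dkinv p

/-- `ε` takes the prescribed values on the generators of `D`. -/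
def IsCounitD (p : ℕ) (ε : Dq p →ₐ[ℂ] ℂ) : Prop :=
  ε (De p) = 0 ∧ ε (Dphi p) = 0 ∧ ε (Dk p) = 1 ∧ ε (Dkinv p) = 1

/-- `S` is an algebra anti-homomorphism taking the prescribed values on the
generators of `D`. -/
def IsAntipodeD (p : ℕ) (S : Dq p →ₗ[ℂ] Dq p) : Prop :=
  S 1 = 1 ∧ (∀ x y, S (x * y) = S y * S x) ∧
  S (De p) = -(De p * Dkinv p ^ 2) ∧ S (Dphi p) = -(Dk p ^ 2 * Dphi p) ∧
  S (Dk p) = Dkinv p ∧ S (Dkinv p) = Dk p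

/-- `ι` takes the prescribed values `E ↦ e`, `F ↦ φ`, `K^{±1} ↦ k^{±2}`. -/
def IsIota (p : ℕ) (ι : Uq p →ₐ[ℂ] Dq p) : Prop :=
  ι (UE p) = De p ∧ ι (UF p) = Dphi p ∧ ι (UK p) = Dk p ^ 2 ∧
  ι (UKinv p) = Dkinv p ^ 2

/-- `μ` takes the prescribed values on the PBW basis of `U`. -/
def IsMu (p : ℕ) (μ : Uq p →ₗ[ℂ] ℂ) : Prop :=
  ∀ m n l : ℕ, m < p → n < p → l < 2 * p →
    μ (UE p ^ m * UF p ^ n * UK p ^ l) =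
      if m = p - 1 ∧ n = p - 1 ∧ l = p + 1 then
        -((Real.sqrt (2 / (p : ℝ)) : ℂ)) * (qfac p (p - 1)) ^ 2
      else 0

variable {A : Type*} [Ring A] [Algebra ℂ A]

/-- Coassociativity of a comultiplication. -/
def Coassoc (Δ : A →ₐ[ℂ] A ⊗[ℂ] A) : Prop :=
  ∀ x, TensorProduct.assoc ℂ A A A
      (TensorProduct.map Δ.toLinearMap LinearMap.id (Δ x)) =
    TensorProduct.map LinearMap.id Δ.toLinearMap (Δ x)

/-- The counit axiom. -/
def CounitAxiom (Δ : A →ₐ[ℂ] A ⊗[ℂ] A) (ε : A →ₐ[ℂ] ℂ) : Prop :=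
  (∀ x, TensorProduct.lid ℂ A
      (TensorProduct.map ε.toLinearMap LinearMap.id (Δ x)) = x) ∧
  (∀ x, TensorProduct.rid ℂ A
      (TensorProduct.map LinearMap.id ε.toLinearMap (Δ x)) = x)

/-- The antipode axiom. -/
def AntipodeAxiom (Δ : A →ₐ[ℂ] A ⊗[ℂ] A) (ε : A →ₐ[ℂ] ℂ)
    (S : A →ₗ[ℂ] A) : Prop :=
  (∀ x, LinearMap.mul' ℂ A (TensorProduct.map S LinearMap.id (Δ x)) = ε x • 1) ∧
  (∀ x, LinearMap.mul' ℂ A (TensorProduct.map LinearMap.id S (Δ x)) = ε x • 1)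

/-- `x ↦ x ⊗ 1`. -/
def e1 (p : ℕ) : Dq p →ₗ[ℂ] Dq p ⊗[ℂ] Dq p :=
  (TensorProduct.mk ℂ (Dq p) (Dq p)).flip 1

/-- `x ↦ 1 ⊗ x`. -/
def e2 (p : ℕ) : Dq p →ₗ[ℂ] Dq p ⊗[ℂ] Dq p :=
  TensorProduct.mk ℂ (Dq p) (Dq p) 1

/-- The balancing element `g = K^{p+1}`. -/
def gU (p : ℕ) : Uq p := UK p ^ (p + 1)

/-- The span of commutators `[U,U]`. -/
def commSpan (p : ℕ) : Submodule ℂ (Uq p) :=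
  Submodule.span ℂ {z : Uq p | ∃ x y : Uq p, z = x * y - y * x}

section Aux
variable (p : ℕ)

local notation "UU" => Uq p
local notation "E" => UE p
local notation "F" => UF p
local notation "K" => UK p
local notation "Ki" => UKinv p

lemma qq_ne_zero : qq p ≠ 0 := Complex.exp_ne_zero _

lemma qq_sq_ne_zero : (qq p) ^ 2 ≠ 0 := pow_ne_zero _ (qq_ne_zero p)

lemma K_mul_Ki : K * Ki = 1 := by
  have h := RingQuot.mkAlgHom_rel ℂ (URel.KKinv (p := p))
  simpa [UK, UKinv, map_mul, map_one] using h

lemma Ki_mul_K : Ki * K = 1 := by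
  have h := RingQuot.mkAlgHom_rel ℂ (URel.KinvK (p := p))
  simpa [UK, UKinv, map_mul, map_one] using h

lemma K_pow_2p : K ^ (2 * p) = 1 := by
  have h := RingQuot.mkAlgHom_rel ℂ (URel.Kpow (p := p))
  simpa [UK, map_pow, map_one] using h

lemma E_pow_p : E ^ p = 0 := by
  have h := RingQuot.mkAlgHom_rel ℂ (URel.Epow (p := p))
  simpa [UE, map_pow, map_zero] using h

lemma F_pow_p : F ^ p = 0 := by
  have h := RingQuot.mkAlgHom_rel ℂ (URel.Fpow (p := p))
  simpa [UF, map_pow, map_zero] using h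

lemma KEKi : K * E * Ki = (qq p) ^ 2 • E := by
  have h := RingQuot.mkAlgHom_rel ℂ (URel.KE (p := p))
  simpa [UK, UE, UKinv, map_mul, map_smul] using h

lemma KFKi : K * F * Ki = ((qq p) ^ 2)⁻¹ • F := by
  have h := RingQuot.mkAlgHom_rel ℂ (URel.KF (p := p))
  simpa [UK, UF, UKinv, map_mul, map_smul] using h

lemma EF_rel : E * F - F * E = (qq p - (qq p)⁻¹)⁻¹ • (K - Ki) := by
  have h := RingQuot.mkAlgHom_rel ℂ (URel.EF (p := p))
  simpa [UE, UF, UK, UKinv, map_mul, map_sub, map_smul] using h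

lemma K_mul_E : K * E = (qq p) ^ 2 • (E * K) := by
  calc K * E = (K * E * Ki) * K := by rw [mul_assoc, Ki_mul_K, mul_one]
  _ = (qq p) ^ 2 • (E * K) := by rw [KEKi, smul_mul_assoc]

lemma K_mul_F : K * F = ((qq p) ^ 2)⁻¹ • (F * K) := by
  calc K * F = (K * F * Ki) * K := by rw [mul_assoc, Ki_mul_K, mul_one]
  _ = ((qq p) ^ 2)⁻¹ • (F * K) := by rw [KFKi, smul_mul_assoc]

lemma Ki_mul_F : Ki * F = (qq p) ^ 2 • (F * Ki) := by
  have h1 : F * Ki = ((qq p) ^ 2)⁻¹ • (Ki * F) := by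
    calc F * Ki = Ki * (K * F) * Ki := by rw [← mul_assoc, Ki_mul_K, one_mul]
    _ = ((qq p) ^ 2)⁻¹ • (Ki * (F * K) * Ki) := by rw [K_mul_F, mul_smul_comm, smul_mul_assoc]
    _ = ((qq p) ^ 2)⁻¹ • (Ki * F) := by
          rw [← mul_assoc, mul_assoc (Ki * F), K_mul_Ki, mul_one]
  rw [h1, smul_smul, mul_inv_cancel₀ (qq_sq_ne_zero p), one_smul]

end Aux

section Aux2
variable {A : Type*} [Ring A] [Algebra ℂ A]

/-- generic: if `x*y = s•(y*x)` then `x^a*y = s^a•(y*x^a)`. -/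
lemma pow_mul_twist {x y : A} {s : ℂ} (h : x * y = s • (y * x)) (a : ℕ) :
    x ^ a * y = s ^ a • (y * x ^ a) := by
  induction a with
  | zero => simp
  | succ a ih =>
    calc x ^ (a+1) * y = x ^ a * (x * y) := by rw [pow_succ, mul_assoc]
    _ = s • ((x ^ a * y) * x) := by rw [h, mul_smul_comm, mul_assoc]
    _ = s • (s ^ a • (y * x ^ a * x)) := by rw [ih, smul_mul_assoc]
    _ = s ^ (a+1) • (y * x ^ (a+1)) := by
        rw [smul_smul, mul_assoc, ← pow_succ, ← pow_succ']

/-- generic: if `x*y = s•(y*x)` then `x*y^a = s^a•(y^a*x)`. -/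
lemma mul_pow_twist {x y : A} {s : ℂ} (h : x * y = s • (y * x)) (a : ℕ) :
    x * y ^ a = s ^ a • (y ^ a * x) := by
  induction a with
  | zero => simp
  | succ a ih =>
    calc x * y ^ (a+1) = (x * y ^ a) * y := by rw [pow_succ, mul_assoc]
    _ = s ^ a • (y ^ a * (x * y)) := by rw [ih, smul_mul_assoc, mul_assoc]
    _ = s ^ a • (s • (y ^ a * (y * x))) := by rw [h, mul_smul_comm]
    _ = s ^ (a+1) • (y ^ (a+1) * x) := by
        rw [smul_smul, ← mul_assoc, ← pow_succ, ← pow_succ]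

end Aux2

section Aux3
variable (p : ℕ)

local notation "E" => UE p
local notation "F" => UF p
local notation "K" => UK p
local notation "Ki" => UKinv p

lemma Kpow_mul_E (l : ℕ) : K ^ l * E = ((qq p) ^ 2) ^ l • (E * K ^ l) :=
  pow_mul_twist (K_mul_E p) l

lemma Kpow_mul_F (l : ℕ) : K ^ l * F = (((qq p) ^ 2)⁻¹) ^ l • (F * K ^ l) :=
  pow_mul_twist (K_mul_F p) l

lemma Kipow_mul_F (a : ℕ) : Ki ^ a * F = ((qq p) ^ 2) ^ a • (F * Ki ^ a) :=
  pow_mul_twist (Ki_mul_F p) a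

lemma K_mul_Fpow (a : ℕ) : K * F ^ a = (((qq p) ^ 2)⁻¹) ^ a • (F ^ a * K) :=
  mul_pow_twist (K_mul_F p) a

lemma Ki_mul_Fpow (a : ℕ) : Ki * F ^ a = ((qq p) ^ 2) ^ a • (F ^ a * Ki) :=
  mul_pow_twist (Ki_mul_F p) a

lemma Ki_eq (hp : 1 ≤ p) : Ki = K ^ (2 * p - 1) := by
  have h2p : 2 * p - 1 + 1 = 2 * p := by omega
  calc Ki = Ki * K ^ (2 * p) := by rw [K_pow_2p, mul_one]
  _ = Ki * (K * K ^ (2 * p - 1)) := by rw [← pow_succ', h2p]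
  _ = K ^ (2 * p - 1) := by rw [← mul_assoc, Ki_mul_K, one_mul]

lemma K_pow_mod (_hp : 1 ≤ p) (N : ℕ) : K ^ N = K ^ (N % (2 * p)) := by
  conv_lhs => rw [← Nat.div_add_mod N (2 * p)]
  rw [pow_add, pow_mul, K_pow_2p, one_pow, one_mul]

lemma F_mul_E : F * E = E * F - (qq p - (qq p)⁻¹)⁻¹ • K + (qq p - (qq p)⁻¹)⁻¹ • Ki := by
  have h := EF_rel p
  have h2 : F * E = E * F - (E * F - F * E) := by abel
  rw [h2, h, smul_sub]
  abel

lemma Fpow_mul_E (n : ℕ) : ∃ a b : ℂ,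
    F ^ (n + 1) * E = E * F ^ (n + 1) + a • (F ^ n * K) + b • (F ^ n * Ki) := by
  induction n with
  | zero =>
    refine ⟨-(qq p - (qq p)⁻¹)⁻¹, (qq p - (qq p)⁻¹)⁻¹, ?_⟩
    simp only [zero_add, pow_one, pow_zero, one_mul]
    rw [F_mul_E p]
    module
  | succ n ih =>
    obtain ⟨a, b, ih⟩ := ih
    set c := (qq p - (qq p)⁻¹)⁻¹ with hc
    refine ⟨a - c * (((qq p) ^ 2)⁻¹) ^ (n + 1), b + c * ((qq p) ^ 2) ^ (n + 1), ?_⟩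
    have step1 : F ^ (n + 2) * E = F * (F ^ (n + 1) * E) := by
      rw [← mul_assoc, ← pow_succ']
    rw [step1, ih]
    rw [mul_add, mul_add, mul_smul_comm, mul_smul_comm]
    have h1 : F * (E * F ^ (n + 1)) = (F * E) * F ^ (n + 1) := by rw [mul_assoc]
    have h2 : F * (F ^ n * K) = F ^ (n + 1) * K := by rw [← mul_assoc, ← pow_succ']
    have h3 : F * (F ^ n * Ki) = F ^ (n + 1) * Ki := by rw [← mul_assoc, ← pow_succ']
    rw [h1, h2, h3, F_mul_E p, ← hc, add_mul, sub_mul, smul_mul_assoc, smul_mul_assoc]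
    have h4 : E * F * F ^ (n + 1) = E * F ^ (n + 2) := by
      rw [mul_assoc, ← pow_succ']
    have h5 : K * F ^ (n + 1) = (((qq p) ^ 2)⁻¹) ^ (n + 1) • (F ^ (n + 1) * K) :=
      K_mul_Fpow p (n + 1)
    have h6 : Ki * F ^ (n + 1) = ((qq p) ^ 2) ^ (n + 1) • (F ^ (n + 1) * Ki) :=
      Ki_mul_Fpow p (n + 1)
    rw [h4, h5, h6]
    module

end Aux3

section Aux4
variable (p : ℕ)


/-- Span of the PBW monomials. -/
def pbwS : Submodule ℂ (Uq p) :=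
  Submodule.span ℂ
    {x | ∃ m n l, m < p ∧ n < p ∧ l < 2 * p ∧ x = (UE p) ^ m * (UF p) ^ n * (UK p) ^ l}

lemma pbw_mem {m n l : ℕ} (hm : m < p) (hn : n < p) (hl : l < 2 * p) :
    (UE p) ^ m * (UF p) ^ n * (UK p) ^ l ∈ pbwS p :=
  Submodule.subset_span ⟨m, n, l, hm, hn, hl, rfl⟩

lemma pbw_memN (hp : 2 ≤ p) {m n : ℕ} (N : ℕ) (hm : m < p) (hn : n < p) :
    (UE p) ^ m * (UF p) ^ n * (UK p) ^ N ∈ pbwS p := by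
  rw [K_pow_mod p (by omega) N]
  exact pbw_mem p hm hn (Nat.mod_lt _ (by omega))

lemma pbw_mul_gen (hp : 2 ≤ p) {x : Uq p} (hx : x ∈ pbwS p) (g : UGen) :
    x * RingQuot.mkAlgHom ℂ (URel p) (FreeAlgebra.ι ℂ g) ∈ pbwS p := by
  induction hx using Submodule.span_induction with
  | zero => rw [zero_mul]; exact zero_mem _
  | add x y _ _ hx hy => rw [add_mul]; exact add_mem hx hy
  | smul c x _ hx => rw [smul_mul_assoc]; exact Submodule.smul_mem _ _ hx
  | mem x h =>
    obtain ⟨m, n, l, hm, hn, hl, rfl⟩ := h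
    cases g
    case K =>
      show (UE p) ^ m * (UF p) ^ n * (UK p) ^ l * (UK p) ∈ pbwS p
      rw [mul_assoc, ← pow_succ]
      exact pbw_memN p hp _ hm hn
    case Kinv =>
      show (UE p) ^ m * (UF p) ^ n * (UK p) ^ l * (UKinv p) ∈ pbwS p
      rw [mul_assoc, Ki_eq p (by omega), ← pow_add]
      exact pbw_memN p hp _ hm hn
    case F =>
      show (UE p) ^ m * (UF p) ^ n * (UK p) ^ l * (UF p) ∈ pbwS p
      rw [mul_assoc, Kpow_mul_F, mul_smul_comm, ← mul_assoc,
        mul_assoc ((UE p) ^ m), ← pow_succ]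
      rcases Nat.lt_or_ge (n + 1) p with h | h
      · exact Submodule.smul_mem _ _ (pbw_mem p hm h hl)
      · have hn1 : n + 1 = p := by omega
        rw [hn1, F_pow_p, mul_zero, zero_mul, smul_zero]
        exact zero_mem _
    case E =>
      show (UE p) ^ m * (UF p) ^ n * (UK p) ^ l * (UE p) ∈ pbwS p
      rw [mul_assoc, Kpow_mul_E, mul_smul_comm, ← mul_assoc]
      refine Submodule.smul_mem _ _ ?_
      rcases n with _ | n'
      · -- n = 0
        simp only [pow_zero, mul_one]
        rw [← pow_succ]
        rcases Nat.lt_or_ge (m + 1) p with h | h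
        · have : (UE p) ^ (m+1) * (UK p) ^ l
              = (UE p) ^ (m+1) * (UF p) ^ 0 * (UK p) ^ l := by
            rw [pow_zero, mul_one]
          rw [this]
          exact pbw_mem p h (by omega) hl
        · have hm1 : m + 1 = p := by omega
          rw [hm1, E_pow_p, zero_mul]
          exact zero_mem _
      · obtain ⟨a, b, hab⟩ := Fpow_mul_E p n'
        rw [mul_assoc ((UE p) ^ m), hab, mul_add, mul_add, add_mul, add_mul,
          mul_smul_comm, mul_smul_comm, smul_mul_assoc, smul_mul_assoc]
        refine add_mem (add_mem ?_ ?_) ?_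
        · rw [← mul_assoc]
          rcases Nat.lt_or_ge (m + 1) p with h | h
          · rw [show (UE p) ^ m * (UE p) = (UE p) ^ (m + 1) by rw [← pow_succ]]
            exact pbw_mem p h hn hl
          · have hm1 : m + 1 = p := by omega
            rw [show (UE p) ^ m * (UE p) = (UE p) ^ (m + 1) by rw [← pow_succ], hm1, E_pow_p,
              zero_mul, zero_mul]
            exact zero_mem _
        · refine Submodule.smul_mem _ _ ?_
          rw [← mul_assoc, mul_assoc ((UE p) ^ m * (UF p) ^ n') , ← pow_succ']
          exact pbw_memN p hp _ hm (by omega)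
        · refine Submodule.smul_mem _ _ ?_
          rw [← mul_assoc, mul_assoc ((UE p) ^ m * (UF p) ^ n'), Ki_eq p (by omega), ← pow_add]
          exact pbw_memN p hp _ hm (by omega)

lemma pbw_top (hp : 2 ≤ p) (x : Uq p) : x ∈ pbwS p := by
  have hone : (1 : Uq p) ∈ pbwS p := by
    simpa using pbw_mem p (show 0 < p by omega) (show 0 < p by omega)
      (show 0 < 2 * p by omega)
  have hgen : ∀ y : FU, ∀ x ∈ pbwS p, x * RingQuot.mkAlgHom ℂ (URel p) y ∈ pbwS p := by
    intro y
    induction y using FreeAlgebra.induction with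
    | grade0 r =>
      intro x hx
      rw [AlgHom.commutes, Algebra.algebraMap_eq_smul_one, mul_smul_comm, mul_one]
      exact Submodule.smul_mem _ _ hx
    | grade1 g => intro x hx; exact pbw_mul_gen p hp hx g
    | mul a b ha hb =>
      intro x hx
      rw [map_mul, ← mul_assoc]
      exact hb _ (ha _ hx)
    | add a b ha hb =>
      intro x hx
      rw [map_add, mul_add]
      exact add_mem (ha _ hx) (hb _ hx)
  obtain ⟨y, rfl⟩ := RingQuot.mkAlgHom_surjective ℂ (URel p) x
  simpa using hgen y 1 hone

end Aux4

section Aux5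
variable (p : ℕ)

/-- lower-order terms in the first leg for powers of `Δ(E)`. -/
def LEm (m : ℕ) : Submodule ℂ (Uq p ⊗[ℂ] Uq p) :=
  Submodule.span ℂ {t | ∃ i z, i < m ∧ t = (UE p ^ i) ⊗ₜ[ℂ] z}

/-- lower-order terms in the first leg for powers of `Δ(F)`. -/
def LFn (n : ℕ) : Submodule ℂ (Uq p ⊗[ℂ] Uq p) :=
  Submodule.span ℂ
    {t | ∃ j z, j < n ∧ t = (UF p ^ j * UKinv p ^ (n - j)) ⊗ₜ[ℂ] z}

lemma deltaE_pow (Δ : Uq p →ₐ[ℂ] Uq p ⊗[ℂ] Uq p)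
    (hE : Δ (UE p) = 1 ⊗ₜ[ℂ] UE p + UE p ⊗ₜ[ℂ] UK p) (m : ℕ) :
    Δ (UE p) ^ m - (UE p ^ m) ⊗ₜ[ℂ] (UK p ^ m) ∈ LEm p m := by
  induction m with
  | zero =>
    simp only [pow_zero, Algebra.TensorProduct.one_def]
    rw [sub_self]
    exact zero_mem _
  | succ m ih =>
    have hmul : ∀ u ∈ LEm p m, u * Δ (UE p) ∈ LEm p (m + 1) := by
      intro u hu
      induction hu using Submodule.span_induction with
      | zero => rw [zero_mul]; exact zero_mem _
      | add x y _ _ hx hy => rw [add_mul]; exact add_mem hx hy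
      | smul c x _ hx => rw [smul_mul_assoc]; exact Submodule.smul_mem _ _ hx
      | mem t ht =>
        obtain ⟨i, z, hi, rfl⟩ := ht
        rw [hE, mul_add, Algebra.TensorProduct.tmul_mul_tmul,
          Algebra.TensorProduct.tmul_mul_tmul, mul_one, ← pow_succ]
        exact add_mem (Submodule.subset_span ⟨i, z * UE p, by omega, rfl⟩)
          (Submodule.subset_span ⟨i + 1, z * UK p, by omega, rfl⟩)
    have hstep : Δ (UE p) ^ (m + 1) - (UE p ^ (m + 1)) ⊗ₜ[ℂ] (UK p ^ (m + 1))
        = (Δ (UE p) ^ m - (UE p ^ m) ⊗ₜ[ℂ] (UK p ^ m)) * Δ (UE p)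
          + (UE p ^ m) ⊗ₜ[ℂ] (UK p ^ m * UE p) := by
      rw [pow_succ]
      rw [sub_mul (Δ (UE p) ^ m) ((UE p ^ m) ⊗ₜ[ℂ] (UK p ^ m)) (Δ (UE p))]
      have : ((UE p ^ m) ⊗ₜ[ℂ] (UK p ^ m)) * Δ (UE p)
          = (UE p ^ m) ⊗ₜ[ℂ] (UK p ^ m * UE p)
            + (UE p ^ (m + 1)) ⊗ₜ[ℂ] (UK p ^ (m + 1)) := by
        rw [hE, mul_add, Algebra.TensorProduct.tmul_mul_tmul,
          Algebra.TensorProduct.tmul_mul_tmul, mul_one, ← pow_succ, ← pow_succ]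
      rw [this]
      abel
    rw [hstep]
    exact add_mem (hmul _ ih)
      (Submodule.subset_span ⟨m, UK p ^ m * UE p, by omega, rfl⟩)

lemma deltaF_pow (Δ : Uq p →ₐ[ℂ] Uq p ⊗[ℂ] Uq p)
    (hF : Δ (UF p) = UKinv p ⊗ₜ[ℂ] UF p + UF p ⊗ₜ[ℂ] 1) (n : ℕ) :
    Δ (UF p) ^ n - (UF p ^ n) ⊗ₜ[ℂ] (1 : Uq p) ∈ LFn p n := by
  induction n with
  | zero =>
    simp only [pow_zero, Algebra.TensorProduct.one_def]
    rw [sub_self]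
    exact zero_mem _
  | succ n ih =>
    have hmul : ∀ u ∈ LFn p n, u * Δ (UF p) ∈ LFn p (n + 1) := by
      intro u hu
      induction hu using Submodule.span_induction with
      | zero => rw [zero_mul]; exact zero_mem _
      | add x y _ _ hx hy => rw [add_mul]; exact add_mem hx hy
      | smul c x _ hx => rw [smul_mul_assoc]; exact Submodule.smul_mem _ _ hx
      | mem t ht =>
        obtain ⟨j, z, hj, rfl⟩ := ht
        rw [hF, mul_add, Algebra.TensorProduct.tmul_mul_tmul,
          Algebra.TensorProduct.tmul_mul_tmul, mul_one]
        refine add_mem ?_ ?_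
        · have h1 : UF p ^ j * UKinv p ^ (n - j) * UKinv p
              = UF p ^ j * UKinv p ^ (n + 1 - j) := by
            rw [mul_assoc, ← pow_succ, show n + 1 - j = n - j + 1 by omega]
          rw [h1]
          exact Submodule.subset_span ⟨j, z * UF p, by omega, rfl⟩
        · have h2 : UF p ^ j * UKinv p ^ (n - j) * UF p
              = ((qq p) ^ 2) ^ (n - j) • (UF p ^ (j + 1) * UKinv p ^ (n + 1 - (j + 1))) := by
            rw [mul_assoc, Kipow_mul_F, mul_smul_comm, ← mul_assoc, ← pow_succ,
              show n + 1 - (j + 1) = n - j by omega]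
          rw [h2, ← TensorProduct.smul_tmul']
          exact Submodule.smul_mem _ _
            (Submodule.subset_span ⟨j + 1, z, by omega, rfl⟩)
    have hstep : Δ (UF p) ^ (n + 1) - (UF p ^ (n + 1)) ⊗ₜ[ℂ] (1 : Uq p)
        = (Δ (UF p) ^ n - (UF p ^ n) ⊗ₜ[ℂ] (1 : Uq p)) * Δ (UF p)
          + (UF p ^ n * UKinv p) ⊗ₜ[ℂ] (UF p) := by
      rw [pow_succ]
      rw [sub_mul (Δ (UF p) ^ n) ((UF p ^ n) ⊗ₜ[ℂ] (1 : Uq p)) (Δ (UF p))]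
      have : ((UF p ^ n) ⊗ₜ[ℂ] (1 : Uq p)) * Δ (UF p)
          = (UF p ^ n * UKinv p) ⊗ₜ[ℂ] (UF p)
            + (UF p ^ (n + 1)) ⊗ₜ[ℂ] (1 : Uq p) := by
        rw [hF, mul_add, Algebra.TensorProduct.tmul_mul_tmul,
          Algebra.TensorProduct.tmul_mul_tmul, one_mul, mul_one, ← pow_succ]
      rw [this]
      abel
    rw [hstep]
    refine add_mem (hmul _ ih) ?_
    have h3 : UF p ^ n * UKinv p = UF p ^ n * UKinv p ^ (n + 1 - n) := by
      rw [show n + 1 - n = 1 by omega, pow_one]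
    rw [h3]
    exact Submodule.subset_span ⟨n, UF p, by omega, rfl⟩

end Aux5

section Aux6
variable (p : ℕ)

/-- `(μ ⊗ id)` followed by `lid`. -/
def lam (μ : Uq p →ₗ[ℂ] ℂ) : Uq p ⊗[ℂ] Uq p →ₗ[ℂ] Uq p :=
  (TensorProduct.lid ℂ (Uq p)).toLinearMap ∘ₗ TensorProduct.map μ LinearMap.id

lemma lam_tmul (μ : Uq p →ₗ[ℂ] ℂ) (a b : Uq p) :
    lam p μ (a ⊗ₜ[ℂ] b) = μ a • b := by
  simp [lam]

lemma mu_apply (hp : 2 ≤ p) (μ : Uq p →ₗ[ℂ] ℂ) (hμ : IsMu p μ)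
    (i j N : ℕ) (hi : i < p) (hj : j < p) :
    μ (UE p ^ i * UF p ^ j * UK p ^ N) =
      if i = p - 1 ∧ j = p - 1 ∧ N % (2 * p) = p + 1 then
        -((Real.sqrt (2 / (p : ℝ)) : ℂ)) * (qfac p (p - 1)) ^ 2
      else 0 := by
  rw [K_pow_mod p (by omega) N]
  exact hμ i j _ hi hj (Nat.mod_lt _ (by omega))

lemma mu_zero (hp : 2 ≤ p) (μ : Uq p →ₗ[ℂ] ℂ) (hμ : IsMu p μ) {i j : ℕ} (a l : ℕ)
    (hi : i < p) (hj : j < p) (h : i ≠ p - 1 ∨ j ≠ p - 1) :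
    μ (UE p ^ i * (UF p ^ j * UKinv p ^ a) * UK p ^ l) = 0 := by
  have he : UE p ^ i * (UF p ^ j * UKinv p ^ a) * UK p ^ l
      = UE p ^ i * UF p ^ j * UK p ^ ((2 * p - 1) * a + l) := by
    rw [Ki_eq p (by omega), ← pow_mul, pow_add]
    simp [mul_assoc]
  rw [he, mu_apply p hp μ hμ _ _ _ hi hj, if_neg (by tauto)]

lemma lam_LFn (hp : 2 ≤ p) (μ : Uq p →ₗ[ℂ] ℂ) (hμ : IsMu p μ)
    {m n l : ℕ} (hm : m < p) (hn : n < p) :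
    ∀ v ∈ LFn p n,
      lam p μ (((UE p ^ m) ⊗ₜ[ℂ] (UK p ^ m)) * v * ((UK p ^ l) ⊗ₜ[ℂ] (UK p ^ l))) = 0 := by
  intro v hv
  induction hv using Submodule.span_induction with
  | zero => rw [mul_zero, zero_mul, map_zero]
  | add x y _ _ hx hy => rw [mul_add, add_mul, map_add, hx, hy, add_zero]
  | smul c x _ hx => rw [mul_smul_comm, smul_mul_assoc, map_smul, hx, smul_zero]
  | mem t ht =>
    obtain ⟨j, z, hj, rfl⟩ := ht
    rw [Algebra.TensorProduct.tmul_mul_tmul, Algebra.TensorProduct.tmul_mul_tmul,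
      lam_tmul, mu_zero p hp μ hμ _ _ hm (by omega) (Or.inr (by omega)), zero_smul]

lemma lam_LEm (hp : 2 ≤ p) (μ : Uq p →ₗ[ℂ] ℂ) (hμ : IsMu p μ)
    {m n l : ℕ} (hm : m < p) (hn : n < p) :
    ∀ u ∈ LEm p m,
      lam p μ (u * ((UF p ^ n) ⊗ₜ[ℂ] (1 : Uq p)) * ((UK p ^ l) ⊗ₜ[ℂ] (UK p ^ l))) = 0 := by
  intro u hu
  induction hu using Submodule.span_induction with
  | zero => rw [zero_mul, zero_mul, map_zero]
  | add x y _ _ hx hy => rw [add_mul, add_mul, map_add, hx, hy, add_zero]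
  | smul c x _ hx => rw [smul_mul_assoc, smul_mul_assoc, map_smul, hx, smul_zero]
  | mem t ht =>
    obtain ⟨i, z, hi, rfl⟩ := ht
    rw [Algebra.TensorProduct.tmul_mul_tmul, Algebra.TensorProduct.tmul_mul_tmul,
      lam_tmul, mu_apply p hp μ hμ _ _ _ (by omega) hn, if_neg (by omega), zero_smul]

lemma lam_LEmLFn (hp : 2 ≤ p) (μ : Uq p →ₗ[ℂ] ℂ) (hμ : IsMu p μ)
    {m n l : ℕ} (hm : m < p) (hn : n < p) :
    ∀ u ∈ LEm p m, ∀ v ∈ LFn p n,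
      lam p μ (u * v * ((UK p ^ l) ⊗ₜ[ℂ] (UK p ^ l))) = 0 := by
  intro u hu
  induction hu using Submodule.span_induction with
  | zero => intro v hv; rw [zero_mul, zero_mul, map_zero]
  | add x y _ _ hx hy =>
    intro v hv
    rw [add_mul, add_mul, map_add, hx v hv, hy v hv, add_zero]
  | smul c x _ hx =>
    intro v hv
    rw [smul_mul_assoc, smul_mul_assoc, map_smul, hx v hv, smul_zero]
  | mem t ht =>
    obtain ⟨i, z, hi, rfl⟩ := ht
    intro v hv
    induction hv using Submodule.span_induction with
    | zero => rw [mul_zero, zero_mul, map_zero]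
    | add x y _ _ hx hy => rw [mul_add, add_mul, map_add, hx, hy, add_zero]
    | smul c x _ hx => rw [mul_smul_comm, smul_mul_assoc, map_smul, hx, smul_zero]
    | mem s hs =>
      obtain ⟨j, w, hj, rfl⟩ := hs
      rw [Algebra.TensorProduct.tmul_mul_tmul, Algebra.TensorProduct.tmul_mul_tmul,
        lam_tmul, mu_zero p hp μ hμ _ _ (by omega) (by omega) (Or.inl (by omega)),
        zero_smul]


lemma split4 {R : Type*} [Ring R] (X A Y B C : R) :
    A * B * C + A * (Y - B) * C + (X - A) * B * C + (X - A) * (Y - B) * C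
      = X * Y * C := by
  have e1 : A * (B + (Y - B)) * C = A * B * C + A * (Y - B) * C := by
    rw [mul_add, add_mul]
  have e2 : (X - A) * (B + (Y - B)) * C = (X - A) * B * C + (X - A) * (Y - B) * C := by
    rw [mul_add, add_mul]
  have e3 : B + (Y - B) = Y := by abel
  rw [e3] at e1 e2
  calc A * B * C + A * (Y - B) * C + (X - A) * B * C + (X - A) * (Y - B) * C
      = (A * B * C + A * (Y - B) * C) + ((X - A) * B * C + (X - A) * (Y - B) * C) := by
        abel
    _ = A * Y * C + (X - A) * Y * C := by rw [e1, e2]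
    _ = (A + (X - A)) * Y * C := by rw [add_mul, add_mul]
    _ = X * Y * C := by rw [show A + (X - A) = X by abel]

lemma mu_leaf (hp : 2 ≤ p) (μ : Uq p →ₗ[ℂ] ℂ) (hμ : IsMu p μ)
    (Δ : Uq p →ₐ[ℂ] Uq p ⊗[ℂ] Uq p) (hΔ : IsDeltaU p Δ) {m n l : ℕ}
    (hm : m < p) (hn : n < p) (hl : l < 2 * p) :
    lam p μ (Δ (UE p ^ m * UF p ^ n * UK p ^ l))
      = μ (UE p ^ m * UF p ^ n * UK p ^ l) • 1 := by
  obtain ⟨hE, hF, hK, _⟩ := hΔ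
  have hu := deltaE_pow p Δ hE m
  have hv := deltaF_pow p Δ hF n
  have key : Δ (UE p ^ m * UF p ^ n * UK p ^ l)
      = ((UE p ^ m) ⊗ₜ[ℂ] (UK p ^ m)) * ((UF p ^ n) ⊗ₜ[ℂ] (1 : Uq p))
          * ((UK p ^ l) ⊗ₜ[ℂ] (UK p ^ l))
        + ((UE p ^ m) ⊗ₜ[ℂ] (UK p ^ m))
          * (Δ (UF p) ^ n - (UF p ^ n) ⊗ₜ[ℂ] (1 : Uq p))
          * ((UK p ^ l) ⊗ₜ[ℂ] (UK p ^ l))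
        + (Δ (UE p) ^ m - (UE p ^ m) ⊗ₜ[ℂ] (UK p ^ m))
          * ((UF p ^ n) ⊗ₜ[ℂ] (1 : Uq p))
          * ((UK p ^ l) ⊗ₜ[ℂ] (UK p ^ l))
        + (Δ (UE p) ^ m - (UE p ^ m) ⊗ₜ[ℂ] (UK p ^ m))
          * (Δ (UF p) ^ n - (UF p ^ n) ⊗ₜ[ℂ] (1 : Uq p))
          * ((UK p ^ l) ⊗ₜ[ℂ] (UK p ^ l)) := by
    rw [map_mul, map_mul, map_pow, map_pow, map_pow, hK,
      Algebra.TensorProduct.tmul_pow]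
    exact (split4 (R := Uq p ⊗[ℂ] Uq p) _ _ _ _ _).symm
  rw [key, map_add, map_add, map_add,
    lam_LFn p hp μ hμ hm hn _ hv,
    lam_LEm p hp μ hμ hm hn _ hu,
    lam_LEmLFn p hp μ hμ hm hn _ hu _ hv,
    add_zero, add_zero, add_zero,
    Algebra.TensorProduct.tmul_mul_tmul, Algebra.TensorProduct.tmul_mul_tmul,
    lam_tmul, hμ m n l hm hn hl]
  by_cases hcond : m = p - 1 ∧ n = p - 1 ∧ l = p + 1
  · rw [if_pos hcond]
    obtain ⟨h1, h2, h3⟩ := hcond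
    subst h1; subst h2; subst h3
    congr 1
    rw [mul_one, ← pow_add, show p - 1 + (p + 1) = 2 * p by omega, K_pow_2p]
  · rw [if_neg hcond, zero_smul, zero_smul]

end Aux6

end LogHennings
open LogHennings in
/-- The functional `μ` defined on the PBW basis is a right integral:
`(μ ⊗ id)(Δ(x)) = μ(x) 1` for all `x ∈ U`. -/
theorem mu_is_right_integral (p : ℕ) (hp : 2 ≤ p) :
    ∀ (μ : Uq p →ₗ[ℂ] ℂ) (Δ : Uq p →ₐ[ℂ] Uq p ⊗[ℂ] Uq p),
      IsMu p μ → IsDeltaU p Δ →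
      ∀ x : Uq p,
        TensorProduct.lid ℂ (Uq p)
          (TensorProduct.map μ LinearMap.id (Δ x)) = μ x • 1 := by
  intro μ Δ hμ hΔ x
  have hx := pbw_top p hp x
  have main : lam p μ (Δ x) = μ x • 1 := by
    induction hx using Submodule.span_induction with
    | mem t ht =>
      obtain ⟨m, n, l, hm, hn, hl, rfl⟩ := ht
      exact mu_leaf p hp μ hμ Δ hΔ hm hn hl
    | zero => simp
    | add a b _ _ ha hb => rw [map_add, map_add, ha, hb, map_add, add_smul]
    | smul c a _ ha => rw [map_smul, map_smul, ha, map_smul, smul_assoc]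
  exact main
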